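/- arXiv:1210.4421 — 3 statements merged into one kernel-verified Lean document; each statement's English description precedes it below -/
import Mathlib

section
/- Let S be a right generalized inverse semigroup. (i) For any s ∈ S and any s′, s″ ∈ V(s), one has s′·s = s″·s, so the map κ : S → 𝒫(S) × S, κ(s) = (V(s), s′·s) for any s′ ∈ V(s), is well defined. (ii) κ is injective: if V(s) = V(t) and s′·s = t′·t for some s′ ∈ V(s), t′ ∈ V(t), then s = t. (iii) The image of κ is exactly the set of pairs (V(t), e) where t ∈ S, e is an idempotent of S, and V(t′·t) ∩ V(e) ≠ ∅ for some t′ ∈ V(t). Hence κ gives a bijection between S and the subset of S/γ × E(S) consisting of pairs (γ(s), e) with s′·s γ e. -/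
/-- `t` is a (von Neumann) inverse of `s`. -/
def IsInvOf {S : Type*} [Semigroup S] (t s : S) : Prop :=
  s * t * s = s ∧ t * s * t = t

/-- `e` is an idempotent. -/
def IsIdem {S : Type*} [Semigroup S] (e : S) : Prop := e * e = e

/-- A right generalized inverse semigroup: every element is regular, the product of
idempotents is idempotent, and idempotents satisfy the right normality law `e*f*g = f*e*g`. -/
structure IsRGIS (S : Type*) [Semigroup S] : Prop where
  regular : ∀ s : S, ∃ t, IsInvOf t s
  idem_mul : ∀ e f : S, IsIdem e → IsIdem f → IsIdem (e * f)
  right_normal : ∀ e f g : S, IsIdem e → IsIdem f → IsIdem g → e * f * g = f * e * g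

/-- A right ∗-semigroup structure: axioms (S1)-(S4). -/
structure IsRightStar (S : Type*) [Semigroup S] (star : S → S) : Prop where
  s1 : ∀ s : S, star (star s) = s
  s2 : ∀ s : S, IsInvOf (star s) s
  s3 : ∀ s t : S, star (s * t) = star t * star (s * t * star t)
  s4 : ∀ e : S, IsIdem e → star e = e

/-- An inverse semigroup: `inv s` is an inverse of `s`, and inverses are unique. -/
structure IsInverseSemigroup (S : Type*) [Semigroup S] (inv : S → S) : Prop where
  inv_spec : ∀ s : S, IsInvOf (inv s) s
  inv_unique : ∀ s t : S, IsInvOf t s → t = inv s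

/-- The relation γ : `a γ b` iff `V(a) ∩ V(b) ≠ ∅`. -/
def GammaRel {S : Type*} [Semigroup S] (a b : S) : Prop :=
  ∃ t, IsInvOf t a ∧ IsInvOf t b

/-- The natural partial order on a regular semigroup. -/
def NatLe {S : Type*} [Semigroup S] (a b : S) : Prop :=
  ∃ e f : S, IsIdem e ∧ IsIdem f ∧ a = e * b ∧ a = b * f

/-- Green's L relation. -/
def GreenL {S : Type*} [Semigroup S] (a b : S) : Prop :=
  a = b ∨ ∃ x y : S, a = x * b ∧ b = y * a

/-- An étale homomorphism: for every idempotent `e` of `T`, `θ` restricts to a bijection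
from `T·e` onto `S·θ(e)`. -/
def IsEtaleHom {T S : Type*} [Semigroup T] [Semigroup S] (θ : T → S) : Prop :=
  ∀ e : T, IsIdem e →
    (∀ a b : T, a * e = a → b * e = b → θ a = θ b → a = b) ∧
    (∀ s : S, s * θ e = s → ∃ a : T, a * e = a ∧ θ a = s)


/-
The idempotents form a right normal band, in which two mutually inverse idempotents `e`, `f`
satisfy `f * e = e` (as `f * e = f * e * e = e * f * e`); in particular `L`-related idempotents
are equal. This makes `s' * s` independent of `s' ∈ V(s)`, and gives injectivity: if
`V(s) = V(t)` and `s' * s = t' * t`, the idempotents `s * s'` and `t * s'` are `L`-related, so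
`s = s * s' * t = t * s' * t = t`. For the image, a common inverse of `t' * t` and `e` is itself
idempotent, which forces `e * (t' * t) = t' * t` and `t' * t * e = e`; then `t * e` has the inverse
`e * t'`, the same inverses as `t`, and `e * t' * (t * e) = e`.
-/

def IdemRightNormal (S : Type*) [Semigroup S] : Prop :=
  ∀ e f g : S, IsIdem e → IsIdem f → IsIdem g → e * f * g = f * e * g

section

variable {S : Type*} [Semigroup S]

theorem IsInvOf.isIdem_inv_mul {t s : S} (h : IsInvOf t s) : IsIdem (t * s) := by
  unfold IsIdem; rw [← mul_assoc, h.2]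

theorem IsInvOf.isIdem_mul_inv {t s : S} (h : IsInvOf t s) : IsIdem (s * t) := by
  unfold IsIdem; rw [← mul_assoc, h.1]

theorem IsIdem.isInvOf_self {e : S} (he : IsIdem e) : IsInvOf e e :=
  ⟨by rw [he, he], by rw [he, he]⟩

theorem IsInvOf.mul_eq_of_isIdem
    (hrn : IdemRightNormal S) {e f : S} (he : IsIdem e) (hf : IsIdem f) (hfe : IsInvOf f e) :
    f * e = e ∧ e * f = f := by
  constructor
  · calc f * e = f * e * e := by rw [mul_assoc, he]
      _ = e * f * e := hrn f e e hf he he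
      _ = e := hfe.1
  · calc e * f = e * f * f := by rw [mul_assoc, hf]
      _ = f * e * f := hrn e f f he hf hf
      _ = f := hfe.2

theorem IsIdem.eq_of_mul_eq_of_mul_eq
    (hrn : IdemRightNormal S) {e f : S} (he : IsIdem e) (hf : IsIdem f)
    (hef : e * f = e) (hfe : f * e = f) : e = f := by
  have hinv : IsInvOf f e := ⟨by rw [hef, he], by rw [hfe, hf]⟩
  rw [← (hinv.mul_eq_of_isIdem hrn he hf).1, hfe]

theorem IsInvOf.inv_mul_eq_inv_mul
    (hrn : IdemRightNormal S) {s s' s'' : S} (h' : IsInvOf s' s) (h'' : IsInvOf s'' s) :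
    s' * s = s'' * s :=
  h'.isIdem_inv_mul.eq_of_mul_eq_of_mul_eq hrn h''.isIdem_inv_mul
    (by rw [mul_assoc, ← mul_assoc s, h''.1]) (by rw [mul_assoc, ← mul_assoc s, h'.1])

theorem eq_of_setOf_isInvOf_eq_of_inv_mul_eq
    (hrn : IdemRightNormal S) {s t s' t' : S} (hs : IsInvOf s' s) (ht : IsInvOf t' t)
    (hV : {u : S | IsInvOf u s} = {u : S | IsInvOf u t}) (heq : s' * s = t' * t) : s = t := by
  have hst : s' ∈ {u : S | IsInvOf u t} := hV ▸ hs
  have hs't : s' * t = s' * s := (hst.inv_mul_eq_inv_mul hrn ht).trans heq.symm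
  have hs_eq : s * s' * t = s := by rw [mul_assoc, hs't, ← mul_assoc, hs.1]
  have ht_eq : t * s' * s = t := by rw [mul_assoc, ← hs't, ← mul_assoc, hst.1]
  have hL : s * s' = t * s' :=
    hs.isIdem_mul_inv.eq_of_mul_eq_of_mul_eq hrn hst.isIdem_mul_inv
      (by rw [← mul_assoc, hs_eq]) (by rw [← mul_assoc, ht_eq])
  calc s = s * s' * t := hs_eq.symm
    _ = t * s' * t := by rw [hL]
    _ = t := hst.1

theorem idem_mul_mul_mul_idem {t t' e : S} (he : IsIdem e) (hfe : t' * t * e = e) :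
    e * t' * (t * e) = e := by
  rw [mul_assoc, ← mul_assoc t', hfe, he]

theorem isInvOf_idem_mul_of_mul_idem {t t' e : S} (he : IsIdem e) (hfe : t' * t * e = e) :
    IsInvOf (e * t') (t * e) := by
  constructor
  · rw [mul_assoc, idem_mul_mul_mul_idem he hfe, mul_assoc, he]
  · rw [idem_mul_mul_mul_idem he hfe, ← mul_assoc, he]

namespace IsRGIS

theorem isIdem_of_isInvOf (h : IsRGIS S) {u f : S} (hf : IsIdem f) (hu : IsInvOf u f) :
    IsIdem u := by
  have hu_eq : u * f * (f * u) = u := by rw [← mul_assoc, mul_assoc u f f, hf, hu.2]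
  exact hu_eq ▸ h.idem_mul _ _ hu.isIdem_inv_mul hu.isIdem_mul_inv

theorem mul_eq_of_gammaRel (h : IsRGIS S) {e f : S} (he : IsIdem e) (hf : IsIdem f)
    (hγ : GammaRel f e) : e * f = f ∧ f * e = e := by
  obtain ⟨u, huf, hue⟩ := hγ
  have hu := h.isIdem_of_isInvOf hf huf
  obtain ⟨hue, heu⟩ := hue.mul_eq_of_isIdem h.right_normal he hu
  obtain ⟨huf, hfu⟩ := huf.mul_eq_of_isIdem h.right_normal hf hu
  exact ⟨by rw [← huf, ← mul_assoc, heu], by rw [← hue, ← mul_assoc, hfu]⟩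

theorem setOf_isInvOf_mul_idem (h : IsRGIS S) {t t' e : S} (ht : IsInvOf t' t)
    (he : IsIdem e) (hef : e * (t' * t) = t' * t) (hfe : t' * t * e = e) :
    {x : S | IsInvOf x (t * e)} = {x : S | IsInvOf x t} := by
  ext x
  simp only [Set.mem_ofPred_eq]
  constructor
  · intro hx
    have hxte : x * (t * e) = e :=
      (hx.inv_mul_eq_inv_mul h.right_normal (isInvOf_idem_mul_of_mul_idem he hfe)).trans
        (idem_mul_mul_mul_idem he hfe)
    have hex : e * x = x := by rw [← hxte]; exact hx.2
    have hxt : x * t = t' * t :=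
      calc x * t = x * (t * e) * (t' * t) := by
            rw [mul_assoc x, mul_assoc t, hef, ← mul_assoc t, ht.1]
        _ = t' * t := by rw [hxte, hef]
    constructor
    · rw [mul_assoc, hxt, ← mul_assoc, ht.1]
    · rw [hxt, ← hex, ← mul_assoc, hfe]
  · intro hx
    have hxt : x * t = t' * t := hx.inv_mul_eq_inv_mul h.right_normal ht
    have hex : e * x = x := by rw [← hx.2, hxt, ← mul_assoc, hef]
    constructor
    · rw [mul_assoc t e x, hex, ← mul_assoc, hx.1]
    · rw [← mul_assoc x t e, hxt, hfe, hex]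

end IsRGIS

end

/-- Proposition 2.3(2): the map `κ(s) = (V(s), s'·s)` is well defined, injective, and
its image consists exactly of the pairs `(V(t), e)` with `e` idempotent and `t'·t γ e`. -/
theorem rgis_coordinatization {S : Type*} [Semigroup S] (h : IsRGIS S) :
    (∀ s s' s'' : S, IsInvOf s' s → IsInvOf s'' s → s' * s = s'' * s) ∧
    (∀ s t s' t' : S, IsInvOf s' s → IsInvOf t' t →
      {u : S | IsInvOf u s} = {u : S | IsInvOf u t} → s' * s = t' * t → s = t) ∧
    ({pr : Set S × S | ∃ s s' : S, IsInvOf s' s ∧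
        pr = ({u : S | IsInvOf u s}, s' * s)} =
     {pr : Set S × S | ∃ t t' : S, IsInvOf t' t ∧
        pr.1 = {u : S | IsInvOf u t} ∧ IsIdem pr.2 ∧ GammaRel (t' * t) pr.2}) := by
  refine ⟨fun _ _ _ h' h'' => h'.inv_mul_eq_inv_mul h.right_normal h'',
    fun _ _ _ _ hs ht hV heq => eq_of_setOf_isInvOf_eq_of_inv_mul_eq h.right_normal hs ht hV heq,
    Set.ext fun ⟨V, e⟩ => ⟨?_, ?_⟩⟩
  · rintro ⟨s, s', hs, hpr⟩
    obtain ⟨rfl, rfl⟩ := Prod.ext_iff.mp hpr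
    have hf := hs.isIdem_inv_mul
    exact ⟨s, s', hs, rfl, hf, s' * s, hf.isInvOf_self, hf.isInvOf_self⟩
  · rintro ⟨t, t', ht, rfl, he, hγ⟩
    obtain ⟨hef, hfe⟩ := h.mul_eq_of_gammaRel he ht.isIdem_inv_mul hγ
    refine ⟨t * e, e * t', isInvOf_idem_mul_of_mul_idem he hfe, ?_⟩
    rw [h.setOf_isInvOf_mul_idem ht he hef hfe, idem_mul_mul_mul_idem he hfe]
end

section
/- Let T be a right generalized inverse ∗-semigroup, S an inverse semigroup, and θ : T → S an étale homomorphism. Then the image of θ is a left ideal of S: for every s ∈ S and every x in the range of θ, s·x is in the range of θ. -/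
/-! If `t'` is an inverse of `t`, then `e = t' t` is an idempotent with `t e = t`. Hence
`s θ(t) = s θ(t) θ(e)` lies in `S θ(e)`, which an étale `θ` maps `T e` onto. -/

section

variable {T S : Type*} [Semigroup T] [Semigroup S]

theorem IsInvOf.isIdem_mul {t s : T} (h : IsInvOf t s) : IsIdem (t * s) := by
  show t * s * (t * s) = t * s
  rw [← mul_assoc, h.2]

theorem IsInvOf.mul_mul_eq_self {t s : T} (h : IsInvOf t s) : s * (t * s) = s := by
  rw [← mul_assoc, h.1]

theorem IsEtaleHom.mem_range_of_mul_apply_eq {θ : T → S} (het : IsEtaleHom θ) {e : T}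
    (he : IsIdem e) {s : S} (hs : s * θ e = s) : s ∈ Set.range θ :=
  let ⟨a, _, ha⟩ := (het e he).2 s hs
  ⟨a, ha⟩

theorem IsEtaleHom.mul_apply_mem_range {θ : T → S} (het : IsEtaleHom θ)
    (hhom : ∀ a b : T, θ (a * b) = θ a * θ b) {t t' : T} (ht : IsInvOf t' t) (s : S) :
    s * θ t ∈ Set.range θ :=
  het.mem_range_of_mul_apply_eq ht.isIdem_mul <| by rw [mul_assoc, ← hhom, ht.mul_mul_eq_self]

end

theorem etale_image_left_ideal_general {T S : Type*} [Semigroup T] [Semigroup S]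
    (hT : IsRGIS T)
    (θ : T → S) (hhom : ∀ a b : T, θ (a * b) = θ a * θ b)
    (het : IsEtaleHom θ) :
    ∀ s x : S, (∃ t : T, θ t = x) → ∃ u : T, θ u = s * x := by
  rintro s x ⟨t, rfl⟩
  obtain ⟨t', ht'⟩ := hT.regular t
  exact het.mul_apply_mem_range hhom ht' s

/-- Proposition 2.4(1): the image of an étale homomorphism from a right generalized
inverse ∗-semigroup to an inverse semigroup is a left ideal. -/
theorem etale_image_left_ideal {T S : Type*} [Semigroup T] [Semigroup S]
    (hT : IsRGIS T) (star : T → T) (hstar : IsRightStar T star)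
    (inv : S → S) (hS : IsInverseSemigroup S inv)
    (θ : T → S) (hhom : ∀ a b : T, θ (a * b) = θ a * θ b)
    (het : IsEtaleHom θ) :
    ∀ s x : S, (∃ t : T, θ t = x) → ∃ u : T, θ u = s * x :=
  etale_image_left_ideal_general hT θ hhom het
end

section
/- Let (S, X, p) be a left étale action of an inverse semigroup S, and let S∗X be the associated right generalized inverse ∗-semigroup. For (s,x), (t,y) ∈ S∗X, one has (s,x) ≤ (t,y) in the natural partial order of S∗X if and only if s ≤ t in the natural partial order of S and x ≤ y, where x ≤ y means x = e·y for some idempotent e ∈ E(S). -/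
section SX

variable {S X : Type*} [Semigroup S]

/-- Membership in `S∗X = {(s,x) : s⁻¹s = p(x)}`. -/
def memSX (inv : S → S) (p : X → S) (a : S × X) : Prop :=
  inv a.1 * a.1 = p a.2

/-- The multiplication `(s,x)(t,y) = (st, ((st)⁻¹(st))·y)` on `S∗X`. -/
def mulSX (inv : S → S) (act : S → X → X) (a b : S × X) : S × X :=
  (a.1 * b.1, act (inv (a.1 * b.1) * (a.1 * b.1)) b.2)

/-- The unary operation `(s,x)∗ = (s⁻¹, s·x)` on `S∗X`. -/
def starSX (inv : S → S) (act : S → X → X) (a : S × X) : S × X :=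
  (inv a.1, act a.1 a.2)

end SX

/-!
Both directions come down to the two idempotents `s * inv s` and `inv s * s` attached to `s`.
If `(s, x) = E * (t, y)` then by the definition of the product `x = (inv s * s) • y`.
Conversely, in an inverse semigroup `s ≤ t` means `s = (s * inv s) * t = t * (inv s * s)`, and
`x = g • y` with `g` idempotent forces `x = p x • y = (inv s * s) • y` by (E1) and (E2); so
`E = (s * inv s, s • x)` and `F = (inv s * s, x)` are idempotents of `S∗X` with
`(s, x) = E * (t, y) = (t, y) * F`.
-/

namespace IsInverseSemigroup

variable {S : Type*} [Semigroup S] {inv : S → S}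

theorem inv_inv (hS : IsInverseSemigroup S inv) (s : S) : inv (inv s) = s :=
  (hS.inv_unique (inv s) s ⟨(hS.inv_spec s).2, (hS.inv_spec s).1⟩).symm

theorem inv_eq_self_of_isIdem (hS : IsInverseSemigroup S inv) {e : S} (he : IsIdem e) :
    inv e = e :=
  (hS.inv_unique e e ⟨by rw [he, he], by rw [he, he]⟩).symm

theorem isIdem_inv_mul_self (hS : IsInverseSemigroup S inv) (s : S) : IsIdem (inv s * s) := by
  change inv s * s * (inv s * s) = inv s * s
  rw [← mul_assoc, (hS.inv_spec s).2]

theorem isIdem_mul_inv_self (hS : IsInverseSemigroup S inv) (s : S) : IsIdem (s * inv s) := by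
  change s * inv s * (s * inv s) = s * inv s
  rw [← mul_assoc, (hS.inv_spec s).1]

/-- The inverse `x` of `e * f` equals `f * x * e`, which makes `x` idempotent; hence so is
`e * f = inv x`. -/
theorem isIdem_mul (hS : IsInverseSemigroup S inv) {e f : S} (he : IsIdem e) (hf : IsIdem f) :
    IsIdem (e * f) := by
  obtain ⟨h₁, h₂⟩ := hS.inv_spec (e * f)
  set x := inv (e * f) with hx
  have hx_eq : f * x * e = x := by
    refine hS.inv_unique (e * f) (f * x * e) ⟨?_, ?_⟩
    · calc e * f * (f * x * e) * (e * f) = e * (f * f) * x * (e * e) * f := by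
            simp only [mul_assoc]
        _ = e * f * x * (e * f) := by rw [he, hf]; simp only [mul_assoc]
        _ = e * f := h₁
    · calc f * x * e * (e * f) * (f * x * e) = f * x * (e * e) * (f * f) * x * e := by
            simp only [mul_assoc]
        _ = f * (x * (e * f) * x) * e := by rw [he, hf]; simp only [mul_assoc]
        _ = f * x * e := by rw [h₂]
  have hx_idem : IsIdem x :=
    calc x * x = f * x * e * (f * x * e) := by rw [hx_eq]
      _ = f * (x * (e * f) * x) * e := by simp only [mul_assoc]
      _ = x := by rw [h₂, hx_eq]
  have hef : e * f = x := by rw [← hS.inv_inv (e * f), ← hx, hS.inv_eq_self_of_isIdem hx_idem]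
  rw [IsIdem, hef]
  exact hx_idem

/-- Both `e * f` and `f * e` are inverses of the idempotent `e * f`. -/
theorem mul_comm_of_isIdem (hS : IsInverseSemigroup S inv) {e f : S} (he : IsIdem e)
    (hf : IsIdem f) : e * f = f * e := by
  have hef : IsIdem (e * f) := hS.isIdem_mul he hf
  have hfe : IsIdem (f * e) := hS.isIdem_mul hf he
  have h_self : IsInvOf (e * f) (e * f) := ⟨by rw [hef, hef], by rw [hef, hef]⟩
  have h_swap : IsInvOf (f * e) (e * f) := by
    constructor
    · calc e * f * (f * e) * (e * f) = e * (f * f) * (e * e) * f := by simp only [mul_assoc]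
        _ = e * f * (e * f) := by rw [he, hf]; simp only [mul_assoc]
        _ = e * f := hef
    · calc f * e * (e * f) * (f * e) = f * (e * e) * (f * f) * e := by simp only [mul_assoc]
        _ = f * e * (f * e) := by rw [he, hf]; simp only [mul_assoc]
        _ = f * e := hfe
  exact (hS.inv_unique _ _ h_self).trans (hS.inv_unique _ _ h_swap).symm

theorem inv_mul_rev (hS : IsInverseSemigroup S inv) (s t : S) :
    inv (s * t) = inv t * inv s := by
  obtain ⟨hs₁, hs₂⟩ := hS.inv_spec s
  obtain ⟨ht₁, ht₂⟩ := hS.inv_spec t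
  have comm : t * inv t * (inv s * s) = inv s * s * (t * inv t) :=
    hS.mul_comm_of_isIdem (hS.isIdem_mul_inv_self t) (hS.isIdem_inv_mul_self s)
  refine (hS.inv_unique _ _ ⟨?_, ?_⟩).symm
  · calc s * t * (inv t * inv s) * (s * t) = s * (t * inv t * (inv s * s)) * t := by
          simp only [mul_assoc]
      _ = s * inv s * s * (t * inv t * t) := by rw [comm]; simp only [mul_assoc]
      _ = s * t := by rw [hs₁, ht₁]
  · calc inv t * inv s * (s * t) * (inv t * inv s)
          = inv t * (inv s * s * (t * inv t)) * inv s := by simp only [mul_assoc]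
      _ = inv t * t * inv t * (inv s * s * inv s) := by rw [← comm]; simp only [mul_assoc]
      _ = inv t * inv s := by rw [ht₂, hs₂]

theorem mul_inv_mul_eq_of_eq_idem_mul (hS : IsInverseSemigroup S inv) {s t e : S}
    (he : IsIdem e) (h : s = e * t) : s * inv s * t = s := by
  have comm : t * inv t * e = e * (t * inv t) :=
    hS.mul_comm_of_isIdem (hS.isIdem_mul_inv_self t) he
  rw [h, hS.inv_mul_rev, hS.inv_eq_self_of_isIdem he]
  calc e * t * (inv t * e) * t = e * (t * inv t * e) * t := by simp only [mul_assoc]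
    _ = e * e * (t * inv t * t) := by rw [comm]; simp only [mul_assoc]
    _ = e * t := by rw [he, (hS.inv_spec t).1]

theorem mul_inv_mul_eq_of_eq_mul_idem (hS : IsInverseSemigroup S inv) {s t f : S}
    (hf : IsIdem f) (h : s = t * f) : t * (inv s * s) = s := by
  have comm : f * (inv t * t) = inv t * t * f :=
    hS.mul_comm_of_isIdem hf (hS.isIdem_inv_mul_self t)
  rw [h, hS.inv_mul_rev, hS.inv_eq_self_of_isIdem hf]
  calc t * (f * inv t * (t * f)) = t * (f * (inv t * t)) * f := by simp only [mul_assoc]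
    _ = t * inv t * t * (f * f) := by rw [comm]; simp only [mul_assoc]
    _ = t * f := by rw [(hS.inv_spec t).1, hf]

end IsInverseSemigroup

section EtaleAction

variable {S X : Type*} [Semigroup S] {inv : S → S} {p : X → S} {act : S → X → X}

theorem memSX_iff_of_isIdem (hS : IsInverseSemigroup S inv) {e : S} (he : IsIdem e) (z : X) :
    memSX inv p (e, z) ↔ e = p z := by
  rw [memSX, hS.inv_eq_self_of_isIdem he, he]

theorem mulSX_self_of_isIdem (hS : IsInverseSemigroup S inv) (he1 : ∀ x : X, act (p x) x = x)
    {e : S} (he : IsIdem e) {z : X} (hz : e = p z) :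
    mulSX inv act (e, z) (e, z) = (e, z) := by
  change (e * e, act (inv (e * e) * (e * e)) z) = (e, z)
  rw [he, hS.inv_eq_self_of_isIdem he, he, hz, he1]

/-- (E2) gives `p (g • y) = g * p y * g`, which absorbs `g` on the right. -/
theorem act_eq_p_act_of_isIdem (hS : IsInverseSemigroup S inv)
    (hassoc : ∀ (s t : S) (x : X), act (s * t) x = act s (act t x))
    (he1 : ∀ x : X, act (p x) x = x) (he2 : ∀ (s : S) (x : X), p (act s x) = s * p x * inv s)
    {g : S} (hg : IsIdem g) (y : X) : act g y = act (p (act g y)) y := by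
  have hp_mul : p (act g y) * g = p (act g y) := by
    rw [he2, hS.inv_eq_self_of_isIdem hg, mul_assoc, hg]
  calc act g y = act (p (act g y)) (act g y) := (he1 _).symm
    _ = act (p (act g y)) y := by rw [← hassoc, hp_mul]

end EtaleAction

theorem sx_natural_order_general {S X : Type*} [Semigroup S]
    (inv : S → S) (hS : IsInverseSemigroup S inv)
    (p : X → S) (act : S → X → X)
    (hassoc : ∀ (s t : S) (x : X), act (s * t) x = act s (act t x))
    (he1 : ∀ x : X, act (p x) x = x)
    (he2 : ∀ (s : S) (x : X), p (act s x) = s * p x * inv s)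
    (a b : S × X) (ha : memSX inv p a) :
    (∃ E F : S × X, memSX inv p E ∧ memSX inv p F ∧
        mulSX inv act E E = E ∧ mulSX inv act F F = F ∧
        a = mulSX inv act E b ∧ a = mulSX inv act b F) ↔
      (NatLe a.1 b.1 ∧ ∃ e : S, IsIdem e ∧ a.2 = act e b.2) := by
  obtain ⟨s, x⟩ := a
  obtain ⟨t, y⟩ := b
  change inv s * s = p x at ha
  constructor
  · rintro ⟨⟨e, z⟩, ⟨f, w⟩, -, -, hEE, hFF, haE, haF⟩
    simp only [mulSX, Prod.mk.injEq] at hEE hFF haE haF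
    refine ⟨⟨e, f, hEE.1, hFF.1, haE.1, haF.1⟩, inv s * s, hS.isIdem_inv_mul_self s, ?_⟩
    rw [haE.2, ← haE.1]
  · rintro ⟨⟨e, f, he, hf, hs_left, hs_right⟩, g, hg, hx⟩
    dsimp only at hs_left hs_right hx
    have hx' : x = act (inv s * s) y := by
      rw [ha, hx]
      exact act_eq_p_act_of_isIdem hS hassoc he1 he2 hg y
    have hss : s * inv s = p (act s x) := by
      rw [he2, ← ha, ← mul_assoc, (hS.inv_spec s).1]
    have hE := hS.isIdem_mul_inv_self s
    have hF := hS.isIdem_inv_mul_self s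
    refine ⟨(s * inv s, act s x), (inv s * s, x), (memSX_iff_of_isIdem hS hE _).2 hss,
      (memSX_iff_of_isIdem hS hF _).2 ha, mulSX_self_of_isIdem hS he1 hE hss,
      mulSX_self_of_isIdem hS he1 hF ha, ?_, ?_⟩
    · simp only [mulSX]
      rw [hS.mul_inv_mul_eq_of_eq_idem_mul he hs_left, ← hx']
    · simp only [mulSX]
      rw [hS.mul_inv_mul_eq_of_eq_mul_idem hf hs_right, ha, he1]

/-- Proposition 2.5(2): in `S∗X`, `(s,x) ≤ (t,y)` in the natural partial order if and
only if `s ≤ t` in `S` and `x ≤ y` (i.e. `x = e·y` for some idempotent `e ∈ E(S)`). -/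
theorem sx_natural_order {S X : Type*} [Semigroup S]
    (inv : S → S) (hS : IsInverseSemigroup S inv)
    (p : X → S) (act : S → X → X)
    (hp : ∀ x : X, IsIdem (p x))
    (hassoc : ∀ (s t : S) (x : X), act (s * t) x = act s (act t x))
    (he1 : ∀ x : X, act (p x) x = x)
    (he2 : ∀ (s : S) (x : X), p (act s x) = s * p x * inv s)
    (a b : S × X) (ha : memSX inv p a) (hb : memSX inv p b) :
    (∃ E F : S × X, memSX inv p E ∧ memSX inv p F ∧
        mulSX inv act E E = E ∧ mulSX inv act F F = F ∧
        a = mulSX inv act E b ∧ a = mulSX inv act b F) ↔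
      (NatLe a.1 b.1 ∧ ∃ e : S, IsIdem e ∧ a.2 = act e b.2) :=
  sx_natural_order_general inv hS p act hassoc he1 he2 a b ha
end
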